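/- Let φ : ℝ² → ℝ be C² and η : ℝ → ℝ be C². Assume the kinematic condition -η'(x)φ_x + φ_y = 0 holds along the graph y = η(x) (all partials evaluated at (x,η(x))). Define the unit normal n = (−η', 1)/√(1+η'²). Then the normal derivative of the speed squared satisfies n · ∇(φ_x² + φ_y²) = 2κ(φ_x² + φ_y²) at each point of the graph, where κ = η''/(1+η'²)^{3/2} is the curvature of the graph. -/

import Mathlib

/-!
Write `u = φ_x`, `t = η'`, `τ = (1, t)`, `n = (-t, 1)` and `B` for the Hessian of `φ` at
`(x, η x)`. The Neumann condition says `∇φ = u τ`, so `|∇φ|² = u² (1 + t²)`, and by symmetry of `B`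
the unnormalised normal derivative of `|∇φ|²` is `2 B(n, ∇φ) = 2u B(τ, n)`. Differentiating the
Neumann condition `dφ(x, η x)(n) = 0` along the graph gives `B(τ, n) = η'' u`, so that numerator
is `2 η'' u² = 2 η'' |∇φ|² / (1 + t²)`.
-/

noncomputable def px (f : ℝ × ℝ → ℝ) (p : ℝ × ℝ) : ℝ := fderiv ℝ f p (1, 0)
noncomputable def py (f : ℝ × ℝ → ℝ) (p : ℝ × ℝ) : ℝ := fderiv ℝ f p (0, 1)

/-- speed squared -/
noncomputable def speedSq (φ : ℝ × ℝ → ℝ) (p : ℝ × ℝ) : ℝ := (px φ p) ^ 2 + (py φ p) ^ 2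

theorem ContDiff.hasFDerivAt_fderiv_apply {𝕜 E F : Type*} [NontriviallyNormedField 𝕜]
    [NormedAddCommGroup E] [NormedSpace 𝕜 E] [NormedAddCommGroup F] [NormedSpace 𝕜 F]
    {f : E → F} (hf : ContDiff 𝕜 2 f) (v p : E) :
    HasFDerivAt (fun q => fderiv 𝕜 f q v) ((fderiv 𝕜 (fderiv 𝕜 f) p).flip v) p :=
  ((hf.fderiv_right (by norm_num)).differentiable one_ne_zero p).hasFDerivAt.clm_apply
    (hasFDerivAt_const v p) |>.congr_fderiv (by ext; simp)

theorem ContinuousLinearMap.apply_prod_real (L : ℝ × ℝ →L[ℝ] ℝ) (a b : ℝ) :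
    L (a, b) = a * L (1, 0) + b * L (0, 1) := by
  have : ((a, b) : ℝ × ℝ) = a • (1, 0) + b • (0, 1) := by simp
  rw [this, map_add, map_smul, map_smul, smul_eq_mul, smul_eq_mul]

theorem Real.rpow_three_halves {x : ℝ} (hx : 0 ≤ x) : x ^ ((3 : ℝ) / 2) = x * √x := by
  rw [show (3 : ℝ) / 2 = 1 + 1 / 2 by norm_num, Real.rpow_add' hx (by norm_num), Real.rpow_one,
    Real.sqrt_eq_rpow]

theorem hasFDerivAt_speedSq {φ : ℝ × ℝ → ℝ} (hφ : ContDiff ℝ 2 φ) (p : ℝ × ℝ) :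
    HasFDerivAt (speedSq φ) (2 • (fderiv ℝ (fderiv ℝ φ) p).flip (px φ p, py φ p)) p := by
  have hx := (hφ.hasFDerivAt_fderiv_apply (1, 0) p).pow 2
  have hy := (hφ.hasFDerivAt_fderiv_apply (0, 1) p).pow 2
  refine (hx.add hy).congr_fderiv (ContinuousLinearMap.ext fun w => ?_)
  simp only [add_apply, smul_apply, ContinuousLinearMap.flip_apply]
  rw [ContinuousLinearMap.apply_prod_real (fderiv ℝ (fderiv ℝ φ) p w) (px φ p)]
  simp [px, py]
  ring

theorem fderiv_fderiv_tangent_normal_of_neumann {φ : ℝ × ℝ → ℝ} {η : ℝ → ℝ}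
    (hφ : ContDiff ℝ 2 φ) (hη : ContDiff ℝ 2 η)
    (hneumann : ∀ x, fderiv ℝ φ (x, η x) (-deriv η x, 1) = 0) (x : ℝ) :
    fderiv ℝ (fderiv ℝ φ) (x, η x) (1, deriv η x) (-deriv η x, 1)
      = deriv (deriv η) x * px φ (x, η x) := by
  have hgraph : HasDerivAt (fun y => (y, η y)) (1, deriv η x) x :=
    (hasDerivAt_id x).prodMk ((hη.differentiable (by norm_num)) x).hasDerivAt
  have hdφ : HasDerivAt (fun y => fderiv ℝ φ (y, η y))
      (fderiv ℝ (fderiv ℝ φ) (x, η x) (1, deriv η x)) x :=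
    (((hφ.fderiv_right (by norm_num)).differentiable one_ne_zero _).hasFDerivAt).comp_hasDerivAt
      x hgraph
  have hdη : HasDerivAt (deriv η) (deriv (deriv η) x) x :=
    ((contDiff_succ_iff_deriv.mp hη).2.2.differentiable one_ne_zero x).hasDerivAt
  have hnormal : HasDerivAt (fun y => ((-deriv η y, 1) : ℝ × ℝ)) (-deriv (deriv η) x, 0) x :=
    hdη.neg.prodMk (hasDerivAt_const x 1)
  have hzero := (hdφ.clm_apply hnormal).unique
    ((hasDerivAt_const x (0 : ℝ)).congr_of_eventuallyEq (.of_forall hneumann))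
  rw [ContinuousLinearMap.apply_prod_real (fderiv ℝ φ (x, η x))] at hzero
  rw [px]
  linarith

/-- Key linearisation identity: ∂ₙ(|∇φ|²) = 2κ|∇φ|² along the free boundary. -/
theorem stmt_1 (φ : ℝ × ℝ → ℝ) (η : ℝ → ℝ)
    (hφ : ContDiff ℝ 2 φ) (hη : ContDiff ℝ 2 η)
    (hkin : ∀ x : ℝ, -(deriv η x) * px φ (x, η x) + py φ (x, η x) = 0) :
    ∀ x : ℝ,
      (-(deriv η x) * px (speedSq φ) (x, η x) + py (speedSq φ) (x, η x))
          / Real.sqrt (1 + (deriv η x) ^ 2)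
        = 2 * (deriv (deriv η) x / (1 + (deriv η x) ^ 2) ^ ((3 : ℝ) / 2))
            * speedSq φ (x, η x) := by
  intro x
  set p : ℝ × ℝ := (x, η x)
  set t := deriv η x
  set u := px φ p
  set B := fderiv ℝ (fderiv ℝ φ) p
  have hnormal : B (1, t) (-t, 1) = deriv (deriv η) x * u :=
    fderiv_fderiv_tangent_normal_of_neumann hφ hη
      (fun y => by rw [ContinuousLinearMap.apply_prod_real, one_mul]; exact hkin y) x
  have hpy : py φ p = t * u := by linarith [hkin x]
  have hgrad : (px φ p, py φ p) = u • ((1 : ℝ), t) := by simp [hpy, mul_comm, u]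
  have hsymm : ∀ v w, B v w = B w v := hφ.contDiffAt.isSymmSndFDerivAt (by simp)
  have hnum : -t * px (speedSq φ) p + py (speedSq φ) p = 2 * deriv (deriv η) x * u ^ 2 :=
    calc -t * px (speedSq φ) p + py (speedSq φ) p
        = fderiv ℝ (speedSq φ) p (-t, 1) := by
          rw [ContinuousLinearMap.apply_prod_real, one_mul]; rfl
      _ = 2 * B (-t, 1) (u • (1, t)) := by simp [(hasFDerivAt_speedSq hφ p).fderiv, ← hgrad, B]
      _ = 2 * u * B (1, t) (-t, 1) := by rw [map_smul, hsymm, smul_eq_mul]; ring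
      _ = 2 * deriv (deriv η) x * u ^ 2 := by rw [hnormal]; ring
  have hspeed : speedSq φ p = u ^ 2 * (1 + t ^ 2) := by
    rw [speedSq, hpy]; ring
  have hpos : (0 : ℝ) < 1 + t ^ 2 := by positivity
  rw [hnum, hspeed, Real.rpow_three_halves hpos.le]
  field_simp
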